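/- The map Δ' : Hom(V,W) → ggl(φ)₀ defined by Δ'(A) := (A∘φ, φ∘A), together with the action L_{(F,f)}A = F∘A − A∘f, makes (Hom(V,W), ggl(φ)₀, Δ', L) a crossed module of Lie algebras: Δ' is a Lie algebra homomorphism from ([·,·]_φ) to the commutator bracket, Δ'(L_{(F,f)}A) = [(F,f), Δ'(A)], and L_{Δ'(A₀)}A₁ = [A₀,A₁]_φ. -/
import Mathlib


open LinearMap

variable {K W V : Type} [Field K] [AddCommGroup W] [AddCommGroup V]
  [Module K W] [Module K V]

/-- The bracket `[A₁,A₂]_φ = A₁∘φ∘A₂ − A₂∘φ∘A₁` on `Hom(V,W)`. -/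
def bracketPhi (φ : W →ₗ[K] V) (A₁ A₂ : V →ₗ[K] W) : V →ₗ[K] W :=
  A₁ ∘ₗ φ ∘ₗ A₂ - A₂ ∘ₗ φ ∘ₗ A₁

/-- The action `L_{(F,f)} A = F∘A − A∘f`. -/
def gglAct (F : Module.End K W) (f : Module.End K V) (A : V →ₗ[K] W) : V →ₗ[K] W :=
  F ∘ₗ A - A ∘ₗ f

/-- The crossed module map `Δ'(A) = (A∘φ, φ∘A)`. -/
def gglDelta (φ : W →ₗ[K] V) (A : V →ₗ[K] W) : Module.End K W × Module.End K V :=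
  (A ∘ₗ φ, φ ∘ₗ A)

/-- `(Hom(V,W), ggl(φ)₀, Δ', L)` is a crossed module of Lie algebras. -/
theorem gglDelta_crossed_module (φ : W →ₗ[K] V) :
    (∀ A : V →ₗ[K] W, φ ∘ₗ (gglDelta φ A).1 = (gglDelta φ A).2 ∘ₗ φ) ∧
    (∀ A B : V →ₗ[K] W, gglDelta φ (A + B) = gglDelta φ A + gglDelta φ B) ∧
    (∀ (c : K) (A : V →ₗ[K] W), gglDelta φ (c • A) = c • gglDelta φ A) ∧
    (∀ A₁ A₂ : V →ₗ[K] W,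
      gglDelta φ (bracketPhi φ A₁ A₂) =
        ((gglDelta φ A₁).1 * (gglDelta φ A₂).1 - (gglDelta φ A₂).1 * (gglDelta φ A₁).1,
         (gglDelta φ A₁).2 * (gglDelta φ A₂).2 - (gglDelta φ A₂).2 * (gglDelta φ A₁).2)) ∧
    (∀ (F : Module.End K W) (f : Module.End K V), φ ∘ₗ F = f ∘ₗ φ →
      ∀ A : V →ₗ[K] W,
        gglDelta φ (gglAct F f A) =
          (F * (gglDelta φ A).1 - (gglDelta φ A).1 * F,
           f * (gglDelta φ A).2 - (gglDelta φ A).2 * f)) ∧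
    (∀ A₀ A₁ : V →ₗ[K] W,
      gglAct (gglDelta φ A₀).1 (gglDelta φ A₀).2 A₁ = bracketPhi φ A₀ A₁) := by
  refine ⟨fun A => rfl, ?_, ?_, ?_, ?_, ?_⟩ <;>
    first
      | (intro F f h A
         have h' : ∀ x, φ (F x) = f (φ x) := fun x => LinearMap.congr_fun h x
         ext x <;> simp [gglDelta, gglAct, h'])
      | (intros; ext x <;> simp [gglDelta, gglAct, bracketPhi])
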